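/- Let Λ₁ and Λ₂ be Legendrian lifts whose z-coordinates are given by smooth functions z₁ on M₁ and z₂ on M₂, with Reeb chords given by pairs of distinct points with equal projections, and let S₁ ⊂ ℝ_{>0} and S₂ ⊂ ℝ_{>0} be the sets of Reeb chord lengths of Λ₁ and Λ₂. Then the Legendrian product immersion Λ₁ ⊠ Λ₂, (u₁,u₂) ↦ (π₁(u₁), π₂(u₂), z₁(u₁)+z₂(u₂)), is injective (embedded) if and only if S₁ ∩ S₂ = ∅, i.e. it fails to be injective exactly when some chord of Λ₁ has the same length as some chord of Λ₂. -/
import Mathlib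


/-!
STATEMENT 6: The Legendrian product immersion Λ₁ ⊠ Λ₂ is injective (embedded) if and only
if the sets of Reeb chord lengths of Λ₁ and Λ₂ are disjoint. A Legendrian Λᵢ is modelled as
an injective map u ↦ (πᵢ u, zᵢ u); a Reeb chord is a pair u ≠ u' with πᵢ u = πᵢ u' and its
length is |zᵢ u − zᵢ u'|.
-/

theorem product_embedded_iff_distinct_chord_lengths
    {M₁ M₂ P₁ P₂ : Type}
    (π₁ : M₁ → P₁) (z₁ : M₁ → ℝ) (π₂ : M₂ → P₂) (z₂ : M₂ → ℝ)
    (h₁ : Function.Injective (fun u => (π₁ u, z₁ u)))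
    (h₂ : Function.Injective (fun u => (π₂ u, z₂ u))) :
    Function.Injective
        (fun p : M₁ × M₂ => (π₁ p.1, π₂ p.2, z₁ p.1 + z₂ p.2)) ↔
      ({ℓ : ℝ | ∃ u u', u ≠ u' ∧ π₁ u = π₁ u' ∧ ℓ = |z₁ u - z₁ u'|} ∩
        {ℓ : ℝ | ∃ v v', v ≠ v' ∧ π₂ v = π₂ v' ∧ ℓ = |z₂ v - z₂ v'|} = ∅) := by
  constructor
  · intro hinj
    ext ℓ
    simp only [Set.mem_inter_iff, Set.mem_setOf_eq, Set.mem_empty_iff_false, iff_false]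
    rintro ⟨⟨u, u', hu, hπu, hℓ₁⟩, ⟨v, v', hv, hπv, hℓ₂⟩⟩
    have habs : |z₁ u - z₁ u'| = |z₂ v - z₂ v'| := hℓ₁ ▸ hℓ₂
    rcases abs_eq_abs.mp habs with h | h
    · -- z₁ u - z₁ u' = z₂ v - z₂ v', so (u,v') and (u',v) collide
      have : (fun p : M₁ × M₂ => (π₁ p.1, π₂ p.2, z₁ p.1 + z₂ p.2)) (u, v') =
          (fun p : M₁ × M₂ => (π₁ p.1, π₂ p.2, z₁ p.1 + z₂ p.2)) (u', v) := by
        simp only [Prod.mk.injEq]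
        exact ⟨hπu, hπv.symm, by linarith⟩
      have := hinj this
      exact hu (congrArg Prod.fst this)
    · have : (fun p : M₁ × M₂ => (π₁ p.1, π₂ p.2, z₁ p.1 + z₂ p.2)) (u, v) =
          (fun p : M₁ × M₂ => (π₁ p.1, π₂ p.2, z₁ p.1 + z₂ p.2)) (u', v') := by
        simp only [Prod.mk.injEq]
        exact ⟨hπu, hπv, by linarith⟩
      have := hinj this
      exact hu (congrArg Prod.fst this)
  · intro hdisj
    rintro ⟨u, v⟩ ⟨u', v'⟩ h
    simp only [Prod.mk.injEq] at h
    obtain ⟨hπu, hπv, hz⟩ := h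
    by_cases hu : u = u'
    · subst hu
      have hzv : z₂ v = z₂ v' := by linarith
      have := h₂ (a₁ := v) (a₂ := v') (by simp [hπv, hzv])
      simp [this]
    · exfalso
      have hz1 : z₁ u ≠ z₁ u' := fun hc => hu (h₁ (by simp [hπu, hc]))
      have hz2 : z₂ v ≠ z₂ v' := fun hc => hz1 (by linarith)
      have hv : v ≠ v' := fun hc => hz2 (by rw [hc])
      have hmem : |z₁ u - z₁ u'| ∈
          ({ℓ : ℝ | ∃ u u', u ≠ u' ∧ π₁ u = π₁ u' ∧ ℓ = |z₁ u - z₁ u'|} ∩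
            {ℓ : ℝ | ∃ v v', v ≠ v' ∧ π₂ v = π₂ v' ∧ ℓ = |z₂ v - z₂ v'|}) := by
        refine ⟨⟨u, u', hu, hπu, rfl⟩, ⟨v, v', hv, hπv, ?_⟩⟩
        rw [abs_sub_comm (z₂ v)]
        congr 1
        linarith
      rw [hdisj] at hmem
      exact hmem
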